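/- Vanish-based unsafety for invariant formulas: for φ = □p (an invariant property) and a finite timed word ω = (l₀,d₀)…(lₙ,dₙ), the quantity min over I ⊆ {0,…,n} such that the word obtained by deleting all letters at indices in I satisfies □p (with the empty word satisfying □p) of Σ_{i∈I} dᵢ equals Σ over i with p ∉ lᵢ of dᵢ. Hence for invariant properties the vanish-based definition of unsafety (eq. (8) of the paper) coincides with the direct definition. -/
import Mathlib


open Classical in
/-- Vanish-based unsafety for invariant formulas: for
`φ = □p`, the minimum of `Σ_{i ∈ I} d i` over index sets `I ⊆ {0, …, n}`
whose removal makes every remaining letter contain `p` (the empty word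
satisfying `□p` vacuously) equals `Σ_{i : p ∉ l i} d i`, and this minimum is
attained. -/
theorem stmt_14 {α : Type} (p : α) (l : ℕ → Set α) (d : ℕ → ℝ) (n : ℕ)
    (hd : ∀ i ≤ n, 0 ≤ d i) :
    IsLeast
      {x : ℝ | ∃ I : Finset ℕ, I ⊆ Finset.range (n + 1) ∧
        (∀ i ∈ Finset.range (n + 1), i ∉ I → p ∈ l i) ∧
        x = ∑ i ∈ I, d i}
      (∑ i ∈ (Finset.range (n + 1)).filter (fun i => p ∉ l i), d i) := by
  constructor
  · refine ⟨(Finset.range (n + 1)).filter (fun i => p ∉ l i),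
      Finset.filter_subset _ _, ?_, rfl⟩
    intro i hi hni
    by_contra h
    exact hni (Finset.mem_filter.mpr ⟨hi, h⟩)
  · rintro x ⟨I, hIsub, hI, rfl⟩
    apply Finset.sum_le_sum_of_subset_of_nonneg
    · intro i hi
      rcases Finset.mem_filter.mp hi with ⟨hir, hp⟩
      by_contra h
      exact hp (hI i hir h)
    · intro i hi _
      exact hd i (Nat.lt_succ_iff.mp (Finset.mem_range.mp (hIsub hi)))
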